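/- Let m ≥ 3, let f0, f1 be the automatic transformations of the Mealy automaton B_m, and let S be the semigroup of transformations they generate under composition. Then every element s of S is equal, as a transformation, to a word of one of the following forms: (i) f0^(p₁) f1 f0^(p₂) f1 ⋯ f0^(p_{k−1}) f1 f0^(p_k) with 1 ≤ k ≤ m−1 and p_i ≥ 0 for all i, of total length at least 1; or (ii) f0^(p₁) f1 f0^(p₂) f1 ⋯ f0^(p_{m−2}) f1 f0^(2 p_{m−1}) f1 f0^(p_m) with p_i ≥ 0 for all i. -/

import Mathlib

/-- The sequence of states visited by a Mealy automaton with transition function `tr`,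
started at state `q`, while reading the infinite word `u`. -/
def stateSeq {X Q : Type*} (tr : X → Q → Q) (q : Q) (u : ℕ → X) : ℕ → Q
  | 0 => q
  | k + 1 => tr (u k) (stateSeq tr q u k)

/-- The automatic transformation of infinite words defined by the Mealy automaton with
transition function `tr` and output function `out` at the state `q`. -/
def autTrans {X Q : Type*} (tr : X → Q → Q) (out : X → Q → X) (q : Q) (u : ℕ → X) : ℕ → X :=
  fun n => out (u n) (stateSeq tr q u n)

/-- The transformation given by a word of states: the product (composition, applied from
right to left) of the corresponding automatic transformations. -/
def wordTrans {X Q : Type*} (tr : X → Q → Q) (out : X → Q → X) (w : List Q) :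
    (ℕ → X) → (ℕ → X) :=
  (w.map (autTrans tr out)).foldr (· ∘ ·) id

/-- The growth function of a Mealy automaton: `growth tr out n` is the number of distinct
transformations of infinite words obtained as compositions of exactly `n` automatic
transformations of the automaton. -/
noncomputable def growth {X Q : Type*} (tr : X → Q → Q) (out : X → Q → X) (n : ℕ) : ℕ :=
  Set.ncard { g : (ℕ → X) → (ℕ → X) | ∃ w : List Q, w.length = n ∧ wordTrans tr out w = g }

/-- The `i`-th finite difference of a function `γ`. -/
def fdiff (γ : ℕ → ℤ) : ℕ → ℕ → ℤ
  | 0, n => γ n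
  | i + 1, n => fdiff γ i n - fdiff γ i (n - 1)

/-- Output function of the automaton `B_m`: at `q0` the output swaps `x0` and `x1` and fixes
every other letter; at `q1` the output sends `x_i` to `x_{i+1}` for `i ≤ m−2` and fixes
`x_{m−1}`. -/
def bmOut (m : ℕ) : Fin m → Fin 2 → Fin m := fun x q =>
  if q = 0 then
    if (x : ℕ) = 0 then ⟨1 % m, Nat.mod_lt 1 x.pos⟩
    else if (x : ℕ) = 1 then ⟨0, x.pos⟩
    else x
  else ⟨min (x.val + 1) (m - 1), by have := x.pos; omega⟩

/-- Transition function of the automaton `B_m`: from `q0` the transition goes to `q1` on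
reading `x2` and stays at `q0` otherwise; from `q1` it goes to `q0` on reading `x0` and
stays at `q1` otherwise. -/
def bmTr (m : ℕ) : Fin m → Fin 2 → Fin 2 := fun x q =>
  if q = 0 then (if (x : ℕ) = 2 then 1 else 0)
  else (if (x : ℕ) = 0 then 0 else 1)

/-- The automatic transformations `f0, f1` of the automaton `B_m` at states `q0, q1`. -/
def bmF (m : ℕ) (q : Fin 2) : (ℕ → Fin m) → (ℕ → Fin m) := autTrans (bmTr m) (bmOut m) q

/-- The word `f0^(p₁) f1 f0^(p₂) f1 ⋯ f0^(p_{k−1}) f1 f0^(p_k)` determined by the list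
`[p₁, …, p_k]` of exponents (composed from right to left); the empty list gives the
identity. -/
def nfWord {α : Type*} (f0 f1 : α → α) : List ℕ → (α → α)
  | [] => id
  | [p] => f0^[p]
  | p :: ps => f0^[p] ∘ f1 ∘ nfWord f0 f1 ps

/-!
Left multiplication by `f0` raises the first exponent of a normal form and left multiplication
by `f1` prepends the exponent `0`, so the only issue is a word with too many exponents. It is
brought back to normal form by the relation `H f1 Z = H f0 Z`, where `H` is any normal form word
with `m - 2` exponents and `Z` starts with `f0^(odd) f1` or with `f0^(even) f1 f0^(even) f1`: it
merges the two blocks of `f0` around the `(m-2)`-nd `f1`.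

The relation is proved by a bisimulation of the cascades of automata defined by the two words.
Write `H = A f0^a`: since `A` contains `m - 3` letters `f1`, it sends every letter `≥ x2` to
`x_{m-1}` and keeps its state. The suffix `Z` never outputs `x1` first; when it outputs `x0` both
sides output `x1` and continue in the same state, and when it outputs `x ≥ x2` the difference
is absorbed by `A`. The one new kind of related pair arises when `Z` outputs `x2`: then the block
`f0^a` on one side turns into `f1^a`, while `Z` becomes `f1^(i+1) f0^j`. The suffixes that occur
form three explicit families of words, each closed under the transitions that keep them related.
-/

section Cascade

variable {X Q : Type*}

/-- The word `q₁ ⋯ qₖ` as a cascade of automata: `qₖ` reads the input letter first and each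
state reads the output of the states to its right. -/
@[simp] def cascadeOut (out : X → Q → X) (x : X) : List Q → X
  | [] => x
  | q :: w => out (cascadeOut out x w) q

@[simp] def cascadeTr (tr : X → Q → Q) (out : X → Q → X) (x : X) : List Q → List Q
  | [] => []
  | q :: w => tr (cascadeOut out x w) q :: cascadeTr tr out x w

variable (tr : X → Q → Q) (out : X → Q → X)

theorem cascadeOut_append (x : X) (u v : List Q) :
    cascadeOut out x (u ++ v) = cascadeOut out (cascadeOut out x v) u := by
  induction u with
  | nil => rfl
  | cons q u ih => simp [ih]

theorem cascadeTr_append (x : X) (u v : List Q) :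
    cascadeTr tr out x (u ++ v) =
      cascadeTr tr out (cascadeOut out x v) u ++ cascadeTr tr out x v := by
  induction u with
  | nil => rfl
  | cons q u ih => simp [ih, cascadeOut_append]

theorem stateSeq_cascade_nil (u : ℕ → X) (n : ℕ) :
    stateSeq (cascadeTr tr out) ([] : List Q) u n = [] := by
  induction n with
  | zero => rfl
  | succ n ih => simp [stateSeq, ih]

theorem stateSeq_cascade_cons (q : Q) (w : List Q) (u : ℕ → X) (n : ℕ) :
    stateSeq (cascadeTr tr out) (q :: w) u n =
      stateSeq tr q (autTrans (cascadeTr tr out) (cascadeOut out) w u) n ::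
        stateSeq (cascadeTr tr out) w u n := by
  induction n with
  | zero => rfl
  | succ n ih => simp [stateSeq, ih, autTrans]

theorem wordTrans_eq_autTrans_cascade (w : List Q) :
    wordTrans tr out w = autTrans (cascadeTr tr out) (cascadeOut out) w := by
  induction w with
  | nil => funext u n; simp [wordTrans, autTrans, stateSeq_cascade_nil]
  | cons q w ih =>
    funext u n
    change autTrans tr out q (wordTrans tr out w u) n = _
    simp [ih, autTrans, stateSeq_cascade_cons]

theorem wordTrans_cons (q : Q) (w : List Q) :
    wordTrans tr out (q :: w) = autTrans tr out q ∘ wordTrans tr out w := rfl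

theorem wordTrans_append (u v : List Q) :
    wordTrans tr out (u ++ v) = wordTrans tr out u ∘ wordTrans tr out v := by
  induction u with
  | nil => rfl
  | cons q u ih => rw [List.cons_append, wordTrans_cons, wordTrans_cons, ih]; rfl

theorem wordTrans_replicate (n : ℕ) (q : Q) :
    wordTrans tr out (List.replicate n q) = (autTrans tr out q)^[n] := by
  induction n with
  | zero => rfl
  | succ n ih => rw [List.replicate_succ, wordTrans_cons, ih, Function.iterate_succ']

variable {tr out} in
theorem autTrans_eq_of_bisim (R : Q → Q → Prop)
    (hR : ∀ p q, R p q → ∀ x, out x p = out x q ∧ R (tr x p) (tr x q)) {p q : Q}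
    (hpq : R p q) : autTrans tr out p = autTrans tr out q := by
  funext u n
  have hseq : ∀ k, R (stateSeq tr p u k) (stateSeq tr q u k) := by
    intro k
    induction k with
    | zero => exact hpq
    | succ k ih => exact (hR _ _ ih (u k)).2
  exact (hR _ _ (hseq n) (u n)).1

end Cascade

section NormalFormWords

variable {Q : Type*} (q0 q1 : Q)

def nfStates : List ℕ → List Q
  | [] => []
  | [p] => List.replicate p q0
  | p :: ps => List.replicate p q0 ++ q1 :: nfStates ps

theorem nfStates_cons {l : List ℕ} (p : ℕ) (hl : l ≠ []) :
    nfStates q0 q1 (p :: l) = List.replicate p q0 ++ q1 :: nfStates q0 q1 l := by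
  cases l with
  | nil => exact absurd rfl hl
  | cons => rfl

theorem nfStates_append {l r : List ℕ} (hl : l ≠ []) (hr : r ≠ []) :
    nfStates q0 q1 (l ++ r) = nfStates q0 q1 l ++ q1 :: nfStates q0 q1 r := by
  induction l with
  | nil => exact absurd rfl hl
  | cons p l ih =>
    rcases eq_or_ne l [] with rfl | hl'
    · simp [nfStates_cons _ _ _ hr, nfStates]
    · simp [nfStates_cons _ _ _ hl', nfStates_cons _ _ _ (List.append_ne_nil_of_left_ne_nil hl' r),
        ih hl']

theorem nfStates_concat_add (l : List ℕ) (c k : ℕ) :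
    nfStates q0 q1 (l ++ [c + k]) = nfStates q0 q1 (l ++ [c]) ++ List.replicate k q0 := by
  rcases eq_or_ne l [] with rfl | hl
  · simp [nfStates]
  · simp [nfStates_append _ _ hl, nfStates]

theorem nfStates_merge (l rest : List ℕ) (c d : ℕ) :
    nfStates q0 q1 (l ++ [c + (d + 1)] ++ rest) =
      nfStates q0 q1 (l ++ [c]) ++ q0 :: nfStates q0 q1 (d :: rest) := by
  rcases eq_or_ne rest [] with rfl | hrest
  · simp [nfStates_concat_add, List.replicate_succ, nfStates]
  · rw [nfStates_append _ _ (by simp) hrest, nfStates_concat_add, nfStates_cons _ _ _ hrest]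
    simp [List.replicate_succ]

theorem nfWord_eq_wordTrans_nfStates {X : Type*} (tr : X → Q → Q) (out : X → Q → X)
    (l : List ℕ) :
    nfWord (autTrans tr out q0) (autTrans tr out q1) l = wordTrans tr out (nfStates q0 q1 l) := by
  induction l with
  | nil => rfl
  | cons p l ih =>
    rcases eq_or_ne l [] with rfl | hl
    · exact (wordTrans_replicate tr out p q0).symm
    · rw [nfStates_cons _ _ _ hl, wordTrans_append, wordTrans_cons, wordTrans_replicate, ← ih]
      cases l with
      | nil => exact absurd rfl hl
      | cons => rfl

end NormalFormWords

section NormalFormComp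

variable {α : Type*} (f0 f1 : α → α)

theorem nfWord_succ_cons (p : ℕ) (ps : List ℕ) :
    nfWord f0 f1 ((p + 1) :: ps) = f0 ∘ nfWord f0 f1 (p :: ps) := by
  cases ps with
  | nil => exact Function.iterate_succ' f0 p
  | cons => simp only [nfWord, Function.iterate_succ']; rfl

theorem nfWord_zero_cons {ps : List ℕ} (h : ps ≠ []) :
    nfWord f0 f1 (0 :: ps) = f1 ∘ nfWord f0 f1 ps := by
  cases ps with
  | nil => exact absurd rfl h
  | cons => rfl

end NormalFormComp

namespace BM

open List

variable {m : ℕ}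

theorem val_bmOut_zero (hm : 2 ≤ m) (x : Fin m) :
    (bmOut m x 0).val = if x.val = 0 then 1 else if x.val = 1 then 0 else x.val := by
  simp only [bmOut, if_true]
  split_ifs <;> simp [Nat.mod_eq_of_lt (show 1 < m by omega)]

theorem bmOut_zero_of_two_le {x : Fin m} (hx : 2 ≤ x.val) : bmOut m x 0 = x :=
  Fin.ext (by rw [val_bmOut_zero (by omega)]; split_ifs <;> omega)

theorem val_bmOut_one (x : Fin m) : (bmOut m x 1).val = min (x.val + 1) (m - 1) := rfl

theorem bmTr_zero (x : Fin m) : bmTr m x 0 = if x.val = 2 then 1 else 0 := rfl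

theorem bmTr_one (x : Fin m) : bmTr m x 1 = if x.val = 0 then 0 else 1 := rfl

theorem cascade_replicate_zero_of_three_le {x : Fin m} (hx : 3 ≤ x.val) (a : ℕ) :
    cascadeOut (bmOut m) x (replicate a 0) = x ∧
      cascadeTr (bmTr m) (bmOut m) x (replicate a 0) = replicate a 0 := by
  induction a with
  | zero => simp
  | succ a ih =>
    simp only [replicate_succ, cascadeOut, cascadeTr, ih.1, ih.2, bmTr_zero,
      if_neg (show x.val ≠ 2 by omega), bmOut_zero_of_two_le (show 2 ≤ x.val by omega), and_true]

theorem cascade_replicate_zero_of_eq_two {x : Fin m} (hx : x.val = 2) (a : ℕ) :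
    cascadeOut (bmOut m) x (replicate a 0) = x ∧
      cascadeTr (bmTr m) (bmOut m) x (replicate a 0) = replicate a 1 := by
  induction a with
  | zero => simp
  | succ a ih =>
    simp only [replicate_succ, cascadeOut, cascadeTr, ih.1, ih.2, bmTr_zero, if_pos hx,
      bmOut_zero_of_two_le hx.ge, and_true]

theorem cascade_replicate_zero_of_le_one (hm : 2 ≤ m) {x : Fin m} (hx : x.val ≤ 1) (a : ℕ) :
    (cascadeOut (bmOut m) x (replicate a 0)).val = (x.val + a) % 2 ∧
      cascadeTr (bmTr m) (bmOut m) x (replicate a 0) = replicate a 0 := by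
  induction a with
  | zero => simp; omega
  | succ a ih =>
    simp only [replicate_succ, cascadeOut, cascadeTr, ih.2, bmTr_zero, val_bmOut_zero hm, ih.1]
    constructor
    · split_ifs <;> omega
    · rw [if_neg (by omega)]

theorem cascade_replicate_one_of_pos {x : Fin m} (hx : 1 ≤ x.val) (a : ℕ) :
    (cascadeOut (bmOut m) x (replicate a 1)).val = min (x.val + a) (m - 1) ∧
      cascadeTr (bmTr m) (bmOut m) x (replicate a 1) = replicate a 1 := by
  induction a with
  | zero => simp; omega
  | succ a ih =>
    simp only [replicate_succ, cascadeOut, cascadeTr, ih.2, bmTr_one, val_bmOut_one, ih.1]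
    constructor
    · omega
    · rw [if_neg (by omega)]

theorem cascade_replicate_one_of_eq_zero (hm : 2 ≤ m) {x : Fin m} (hx : x.val = 0) (i : ℕ) :
    (cascadeOut (bmOut m) x (replicate (i + 1) 1)).val = min (i + 1) (m - 1) ∧
      cascadeTr (bmTr m) (bmOut m) x (replicate (i + 1) 1) = replicate i 1 ++ [0] := by
  have hbot : (bmOut m x 1).val = 1 := by rw [val_bmOut_one]; omega
  have htop := cascade_replicate_one_of_pos (x := bmOut m x 1) hbot.ge i
  rw [replicate_succ', cascadeOut_append, cascadeTr_append]
  simp only [cascadeOut, cascadeTr, htop.2, bmTr_one, if_pos hx, htop.1, hbot, and_true]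
  omega

theorem cascade_replicate_zero_one (hm : 3 ≤ m) (n : ℕ) (x : Fin m) :
    (cascadeOut (bmOut m) x (replicate n 0 ++ [1])).val = (n + 1) % 2 ∧
        cascadeTr (bmTr m) (bmOut m) x (replicate n 0 ++ [1]) = replicate n 0 ++ [0] ∨
      (cascadeOut (bmOut m) x (replicate n 0 ++ [1])).val = 2 ∧
        cascadeTr (bmTr m) (bmOut m) x (replicate n 0 ++ [1]) = replicate (n + 1) 1 ∨
      3 ≤ (cascadeOut (bmOut m) x (replicate n 0 ++ [1])).val ∧
        cascadeTr (bmTr m) (bmOut m) x (replicate n 0 ++ [1]) = replicate n 0 ++ [1] := by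
  simp only [cascadeOut_append, cascadeTr_append, cascadeOut, cascadeTr, bmTr_one]
  have hy := val_bmOut_one x
  rcases Nat.eq_zero_or_pos x.val with hx | hx
  · obtain ⟨ho, ht⟩ := cascade_replicate_zero_of_le_one (by omega) (x := bmOut m x 1) (by omega) n
    left
    rw [ho, ht, if_pos hx]
    exact ⟨by omega, rfl⟩
  · rw [if_neg (show x.val ≠ 0 by omega)]
    rcases (by omega : (bmOut m x 1).val = 2 ∨ 3 ≤ (bmOut m x 1).val) with h2 | h3
    · obtain ⟨ho, ht⟩ := cascade_replicate_zero_of_eq_two h2 n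
      right; left
      rw [ho, ht, h2, replicate_succ']
      exact ⟨rfl, rfl⟩
    · obtain ⟨ho, ht⟩ := cascade_replicate_zero_of_three_le h3 n
      right; right
      rw [ho, ht]
      exact ⟨h3, rfl⟩

theorem cascade_oneZero (hm : 2 ≤ m) (i j : ℕ) (x : Fin m) :
    1 ≤ (cascadeOut (bmOut m) x (replicate (i + 1) 1 ++ replicate j 0)).val ∧
      ∃ i' j', cascadeTr (bmTr m) (bmOut m) x (replicate (i + 1) 1 ++ replicate j 0) =
          replicate i' 1 ++ replicate j' 0 ∧
        (2 ≤ (cascadeOut (bmOut m) x (replicate (i + 1) 1 ++ replicate j 0)).val → 1 ≤ i') := by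
  simp only [cascadeOut_append, cascadeTr_append]
  rcases (by omega : x.val ≤ 1 ∨ x.val = 2 ∨ 3 ≤ x.val) with hx | hx | hx
  · obtain ⟨hy, hbot⟩ := cascade_replicate_zero_of_le_one hm hx j
    rw [hbot]
    rcases Nat.eq_zero_or_pos (cascadeOut (bmOut m) x (replicate j 0)).val with hy0 | hy0
    · obtain ⟨ho, ht⟩ := cascade_replicate_one_of_eq_zero hm hy0 i
      rw [ho, ht]
      exact ⟨by omega, i, j + 1, by rw [append_assoc, singleton_append, ← replicate_succ], by omega⟩
    · obtain ⟨ho, ht⟩ := cascade_replicate_one_of_pos hy0 (i + 1)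
      rw [ho, ht]
      exact ⟨by omega, i + 1, j, rfl, by omega⟩
  · obtain ⟨hy, hbot⟩ := cascade_replicate_zero_of_eq_two hx j
    obtain ⟨ho, ht⟩ := cascade_replicate_one_of_pos (x := x) (by omega) (i + 1)
    rw [hbot, hy, ho, ht]
    exact ⟨by omega, i + 1 + j, 0, by simp [replicate_add], by omega⟩
  · obtain ⟨hy, hbot⟩ := cascade_replicate_zero_of_three_le hx j
    obtain ⟨ho, ht⟩ := cascade_replicate_one_of_pos (x := x) (by omega) (i + 1)
    rw [hbot, hy, ho, ht]
    exact ⟨by omega, i + 1, j, rfl, by omega⟩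

def IsOneZero (z : List (Fin 2)) : Prop := ∃ i j, z = replicate (i + 1) 1 ++ replicate j 0

def IsEvenOne (z : List (Fin 2)) : Prop := ∃ c, z = replicate (2 * c) 0 ++ [1]

def IsFlipSuffix (z : List (Fin 2)) : Prop :=
  (∃ b, z = replicate (2 * b + 1) 0 ++ [1]) ∨
    ∃ b v, (IsEvenOne v ∨ IsOneZero v) ∧ z = replicate (2 * b) 0 ++ 1 :: v

theorem IsOneZero.cascade (hm : 2 ≤ m) {z : List (Fin 2)} (hz : IsOneZero z) (x : Fin m) :
    1 ≤ (cascadeOut (bmOut m) x z).val ∧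
      (2 ≤ (cascadeOut (bmOut m) x z).val → IsOneZero (cascadeTr (bmTr m) (bmOut m) x z)) := by
  obtain ⟨i, j, rfl⟩ := hz
  obtain ⟨hpos, i', j', hs, hi'⟩ := cascade_oneZero hm i j x
  refine ⟨hpos, fun h2 => ⟨i' - 1, j', ?_⟩⟩
  rw [hs, Nat.sub_add_cancel (hi' h2)]

theorem cascade_evenOne_or_oneZero (hm : 3 ≤ m) {v : List (Fin 2)}
    (hv : IsEvenOne v ∨ IsOneZero v) (x : Fin m) :
    1 ≤ (cascadeOut (bmOut m) x v).val ∧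
      ((cascadeOut (bmOut m) x v).val = 1 →
        ∃ i j, cascadeTr (bmTr m) (bmOut m) x v = replicate i 1 ++ replicate j 0) ∧
      (2 ≤ (cascadeOut (bmOut m) x v).val →
        IsOneZero (cascadeTr (bmTr m) (bmOut m) x v) ∨
          3 ≤ (cascadeOut (bmOut m) x v).val ∧ IsEvenOne (cascadeTr (bmTr m) (bmOut m) x v)) := by
  rcases hv with ⟨c, rfl⟩ | ⟨i, j, rfl⟩
  · rcases cascade_replicate_zero_one hm (2 * c) x with ⟨ho, hs⟩ | ⟨ho, hs⟩ | ⟨ho, hs⟩ <;>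
      rw [hs]
    · exact ⟨by omega, fun _ => ⟨0, 2 * c + 1, by simp [replicate_succ']⟩, by omega⟩
    · exact ⟨by omega, by omega, fun _ => Or.inl ⟨2 * c, 0, by simp⟩⟩
    · exact ⟨by omega, by omega, fun _ => Or.inr ⟨ho, c, rfl⟩⟩
  · obtain ⟨hpos, i', j', hs, hi'⟩ := cascade_oneZero (by omega) i j x
    refine ⟨hpos, fun _ => ⟨i', j', hs⟩, fun h2 => Or.inl ⟨i' - 1, j', ?_⟩⟩
    rw [hs, Nat.sub_add_cancel (hi' h2)]

theorem IsFlipSuffix.cascade (hm : 3 ≤ m) {z : List (Fin 2)} (hz : IsFlipSuffix z) (x : Fin m) :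
    (cascadeOut (bmOut m) x z).val ≠ 1 ∧
      ((cascadeOut (bmOut m) x z).val = 2 → IsOneZero (cascadeTr (bmTr m) (bmOut m) x z)) ∧
      (3 ≤ (cascadeOut (bmOut m) x z).val → IsFlipSuffix (cascadeTr (bmTr m) (bmOut m) x z)) := by
  rcases hz with ⟨b, rfl⟩ | ⟨b, v, hv, rfl⟩
  · rcases cascade_replicate_zero_one hm (2 * b + 1) x with ⟨ho, hs⟩ | ⟨ho, hs⟩ | ⟨ho, hs⟩ <;>
      rw [hs]
    · exact ⟨by omega, by omega, by omega⟩
    · exact ⟨by omega, fun _ => ⟨2 * b + 1, 0, by simp⟩, by omega⟩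
    · exact ⟨by omega, by omega, fun _ => Or.inl ⟨b, rfl⟩⟩
  obtain ⟨hpos, hone, hge⟩ := cascade_evenOne_or_oneZero hm hv x
  simp only [cascadeOut_append, cascadeTr_append, cascadeOut, cascadeTr, bmTr_one]
  set y := cascadeOut (bmOut m) x v
  set s := cascadeTr (bmTr m) (bmOut m) x v
  have hw : (bmOut m y 1).val = min (y.val + 1) (m - 1) := val_bmOut_one y
  rw [if_neg (show y.val ≠ 0 by omega)]
  rcases (by omega : (bmOut m y 1).val = 2 ∨ 3 ≤ (bmOut m y 1).val) with h2 | h3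
  · obtain ⟨ho, ht⟩ := cascade_replicate_zero_of_eq_two h2 (2 * b)
    rw [ho, ht, h2]
    refine ⟨by omega, fun _ => ?_, by omega⟩
    obtain ⟨i, j, hs⟩ : ∃ i j, s = replicate i 1 ++ replicate j 0 := by
      rcases (by omega : y.val = 1 ∨ 2 ≤ y.val) with h | h
      · exact hone h
      · rcases hge h with ⟨i, j, hs⟩ | ⟨h3, -⟩
        · exact ⟨i + 1, j, hs⟩
        · omega
    refine ⟨2 * b + i, j, ?_⟩
    rw [hs, add_right_comm, ← replicate_append_replicate, replicate_succ']
    simp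
  · obtain ⟨ho, ht⟩ := cascade_replicate_zero_of_three_le h3 (2 * b)
    rw [ho, ht]
    refine ⟨by omega, by omega, fun _ => Or.inr ⟨b, s, ?_, rfl⟩⟩
    rcases hge (by omega) with h | ⟨-, h⟩
    · exact Or.inr h
    · exact Or.inl h

def Saturates (m : ℕ) (A : List (Fin 2)) : Prop :=
  ∀ x : Fin m, 2 ≤ x.val →
    cascadeTr (bmTr m) (bmOut m) x A = A ∧ (cascadeOut (bmOut m) x A).val = m - 1

theorem Saturates.cascadeOut_eq {A : List (Fin 2)} (hA : Saturates m A) {x y : Fin m}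
    (hx : 2 ≤ x.val) (hy : 2 ≤ y.val) : cascadeOut (bmOut m) x A = cascadeOut (bmOut m) y A :=
  Fin.ext ((hA x hx).2.trans (hA y hy).2.symm)

inductive FlipRel (m : ℕ) : List (Fin 2) → List (Fin 2) → Prop
  | refl (w : List (Fin 2)) : FlipRel m w w
  | flip {A z : List (Fin 2)} (a : ℕ) (hA : Saturates m A) (hz : IsFlipSuffix z) :
      FlipRel m (A ++ replicate a 0 ++ 1 :: z) (A ++ replicate a 0 ++ 0 :: z)
  | block {A z : List (Fin 2)} (a : ℕ) (hA : Saturates m A) (hz : IsOneZero z) :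
      FlipRel m (A ++ replicate a 0 ++ 1 :: z) (A ++ replicate a 1 ++ 1 :: z)

theorem FlipRel.step_flip (hm : 3 ≤ m) {A z : List (Fin 2)} (a : ℕ) (hA : Saturates m A)
    (hz : IsFlipSuffix z) (x : Fin m) :
    cascadeOut (bmOut m) x (A ++ replicate a 0 ++ 1 :: z) =
        cascadeOut (bmOut m) x (A ++ replicate a 0 ++ 0 :: z) ∧
      FlipRel m (cascadeTr (bmTr m) (bmOut m) x (A ++ replicate a 0 ++ 1 :: z))
        (cascadeTr (bmTr m) (bmOut m) x (A ++ replicate a 0 ++ 0 :: z)) := by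
  obtain ⟨hne1, h2, h3⟩ := hz.cascade hm x
  simp only [cascadeOut_append, cascadeTr_append, cascadeOut, cascadeTr, bmTr_one, bmTr_zero]
  set y := cascadeOut (bmOut m) x z
  have hu := val_bmOut_one y
  rcases (by omega : y.val = 0 ∨ y.val = 2 ∨ 3 ≤ y.val) with hy | hy | hy
  · have hout : bmOut m y 1 = bmOut m y 0 :=
      Fin.ext (by rw [hu, val_bmOut_zero (by omega), if_pos hy]; omega)
    rw [hout, if_pos hy, if_neg (show y.val ≠ 2 by omega)]
    exact ⟨rfl, .refl _⟩
  · rw [bmOut_zero_of_two_le hy.ge, if_neg (show y.val ≠ 0 by omega), if_pos hy]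
    rcases eq_or_ne m 3 with rfl | hm4
    · rw [Fin.ext (show (bmOut 3 y 1).val = y.val by omega)]
      exact ⟨rfl, .refl _⟩
    obtain ⟨hou, htu⟩ := cascade_replicate_zero_of_three_le (x := bmOut m y 1) (by omega) a
    obtain ⟨hov, htv⟩ := cascade_replicate_zero_of_eq_two hy a
    rw [hou, hov, htu, htv, (hA (bmOut m y 1) (by omega)).1, (hA y (by omega)).1]
    exact ⟨hA.cascadeOut_eq (by omega) (by omega), .block a hA (h2 hy)⟩
  · rw [bmOut_zero_of_two_le (by omega), if_neg (show y.val ≠ 0 by omega),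
      if_neg (show y.val ≠ 2 by omega)]
    obtain ⟨hou, htu⟩ := cascade_replicate_zero_of_three_le (x := bmOut m y 1) (by omega) a
    obtain ⟨hov, htv⟩ := cascade_replicate_zero_of_three_le hy a
    rw [hou, hov, htu, htv, (hA (bmOut m y 1) (by omega)).1, (hA y (by omega)).1]
    exact ⟨hA.cascadeOut_eq (by omega) (by omega), .flip a hA (h3 hy)⟩

theorem FlipRel.step_block (hm : 3 ≤ m) {A z : List (Fin 2)} (a : ℕ) (hA : Saturates m A)
    (hz : IsOneZero z) (x : Fin m) :
    cascadeOut (bmOut m) x (A ++ replicate a 0 ++ 1 :: z) =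
        cascadeOut (bmOut m) x (A ++ replicate a 1 ++ 1 :: z) ∧
      FlipRel m (cascadeTr (bmTr m) (bmOut m) x (A ++ replicate a 0 ++ 1 :: z))
        (cascadeTr (bmTr m) (bmOut m) x (A ++ replicate a 1 ++ 1 :: z)) := by
  obtain ⟨hpos, h2⟩ := hz.cascade (by omega) x
  simp only [cascadeOut_append, cascadeTr_append, cascadeOut, cascadeTr]
  set y := cascadeOut (bmOut m) x z
  have hu := val_bmOut_one y
  rw [bmTr_one, if_neg (show y.val ≠ 0 by omega)]
  obtain ⟨hov, htv⟩ := cascade_replicate_one_of_pos (x := bmOut m y 1) (by omega) a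
  rw [htv, (hA (cascadeOut (bmOut m) (bmOut m y 1) (replicate a 1)) (by omega)).1]
  rcases (by omega : (bmOut m y 1).val = 2 ∨ 3 ≤ (bmOut m y 1).val) with hu2 | hu3
  · obtain ⟨hou, htu⟩ := cascade_replicate_zero_of_eq_two hu2 a
    rw [hou, htu, (hA (bmOut m y 1) (by omega)).1]
    exact ⟨hA.cascadeOut_eq (by omega) (by omega), .refl _⟩
  · obtain ⟨hou, htu⟩ := cascade_replicate_zero_of_three_le hu3 a
    rw [hou, htu, (hA (bmOut m y 1) (by omega)).1]
    exact ⟨hA.cascadeOut_eq (by omega) (by omega), .block a hA (h2 (by omega))⟩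

theorem wordTrans_flip (hm : 3 ≤ m) {A z : List (Fin 2)} (a : ℕ) (hA : Saturates m A)
    (hz : IsFlipSuffix z) :
    wordTrans (bmTr m) (bmOut m) (A ++ replicate a 0 ++ 1 :: z) =
      wordTrans (bmTr m) (bmOut m) (A ++ replicate a 0 ++ 0 :: z) := by
  simp only [wordTrans_eq_autTrans_cascade]
  refine autTrans_eq_of_bisim (FlipRel m) ?_ (.flip a hA hz)
  rintro s t (_ | ⟨a, hA, hz⟩ | ⟨a, hA, hz⟩) x
  · exact ⟨rfl, .refl _⟩
  · exact FlipRel.step_flip hm a hA hz x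
  · exact FlipRel.step_block hm a hA hz x

def IsShift (m k : ℕ) (A : List (Fin 2)) : Prop :=
  ∀ x : Fin m, 2 ≤ x.val → cascadeTr (bmTr m) (bmOut m) x A = A ∧
    (cascadeOut (bmOut m) x A).val = min (x.val + k) (m - 1)

theorem isShift_nil : IsShift m 0 [] := fun x _ => ⟨rfl, by simp; omega⟩

theorem IsShift.append_replicate_one (hm : 4 ≤ m) {k : ℕ} {A : List (Fin 2)}
    (hA : IsShift m k A) (a : ℕ) : IsShift m (k + 1) (A ++ replicate a 0 ++ [1]) := by
  intro x hx
  have hy := val_bmOut_one x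
  obtain ⟨hout, htr⟩ := cascade_replicate_zero_of_three_le (x := bmOut m x 1) (by omega) a
  obtain ⟨hAtr, hAout⟩ := hA (bmOut m x 1) (by omega)
  simp only [cascadeOut_append, cascadeTr_append, cascadeOut, cascadeTr, bmTr_one,
    if_neg (show x.val ≠ 0 by omega), hout, htr, hAtr, hAout, true_and]
  omega

theorem IsShift.saturates {k : ℕ} {A : List (Fin 2)} (hA : IsShift m k A) (hk : m ≤ k + 3) :
    Saturates m A :=
  fun x hx => ⟨(hA x hx).1, by rw [(hA x hx).2]; omega⟩

theorem exists_nfStates_eq_append_isShift (l : List ℕ) (c : ℕ) (hl : l.length + 3 ≤ m) :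
    ∃ A, nfStates 0 1 (l ++ [c]) = A ++ replicate c 0 ∧ IsShift m l.length A := by
  induction l using List.reverseRecOn generalizing c with
  | nil => exact ⟨[], by simp [nfStates], isShift_nil⟩
  | append_singleton l c' ih =>
    simp only [length_append, length_singleton] at hl
    obtain ⟨A, hAeq, hA⟩ := ih c' (by omega)
    refine ⟨A ++ replicate c' 0 ++ [1], ?_, by simpa using hA.append_replicate_one (by omega) c'⟩
    rw [nfStates_append _ _ (by simp) (by simp), hAeq]
    simp [nfStates]

theorem nfWord_merge (hm : 3 ≤ m) {l rest : List ℕ} (hl : l.length + 3 = m) (c d : ℕ)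
    {z T : List (Fin 2)} (hz : IsFlipSuffix z) (hzT : nfStates 0 1 (d :: rest) = z ++ T) :
    nfWord (bmF m 0) (bmF m 1) (l ++ [c, d] ++ rest) =
      nfWord (bmF m 0) (bmF m 1) (l ++ [c + (d + 1)] ++ rest) := by
  obtain ⟨A, hAeq, hA⟩ := exists_nfStates_eq_append_isShift l c (m := m) (by omega)
  simp only [bmF, nfWord_eq_wordTrans_nfStates]
  rw [nfStates_merge, show l ++ [c, d] ++ rest = l ++ [c] ++ d :: rest by simp,
    nfStates_append _ _ (by simp) (by simp), hAeq, hzT]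
  have hflip := congrArg (· ∘ wordTrans (bmTr m) (bmOut m) T)
    (wordTrans_flip hm c (hA.saturates (by omega)) hz)
  simpa only [wordTrans_append, wordTrans_cons, Function.comp_assoc] using hflip

theorem nfWord_merge_of_odd (hm : 3 ≤ m) {l rest : List ℕ} (hl : l.length + 3 = m) (c : ℕ)
    {d : ℕ} (hd : Odd d) (hrest : rest ≠ []) :
    nfWord (bmF m 0) (bmF m 1) (l ++ [c, d] ++ rest) =
      nfWord (bmF m 0) (bmF m 1) (l ++ [c + (d + 1)] ++ rest) := by
  obtain ⟨b, rfl⟩ := hd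
  exact nfWord_merge hm hl c _ (T := nfStates 0 1 rest) (Or.inl ⟨b, rfl⟩)
    (by rw [nfStates_cons _ _ _ hrest]; simp)

theorem nfWord_merge_of_even (hm : 3 ≤ m) {l : List ℕ} (hl : l.length + 3 = m) (c : ℕ)
    {d : ℕ} (hd : Even d) (a b : ℕ) :
    nfWord (bmF m 0) (bmF m 1) (l ++ [c, d] ++ [2 * a, b]) =
      nfWord (bmF m 0) (bmF m 1) (l ++ [c + (d + 1)] ++ [2 * a, b]) := by
  obtain ⟨e, rfl⟩ := hd.two_dvd
  refine nfWord_merge hm hl c _ (z := replicate (2 * e) 0 ++ 1 :: (replicate (2 * a) 0 ++ [1]))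
    (T := replicate b 0) (Or.inr ⟨e, _, Or.inl ⟨a, rfl⟩, rfl⟩) ?_
  simp [nfStates]

def IsNormalForm (m : ℕ) (g : (ℕ → Fin m) → (ℕ → Fin m)) : Prop :=
  (∃ ps : List ℕ, 1 ≤ ps.length ∧ ps.length ≤ m - 1 ∧ ps ≠ [0] ∧
    g = nfWord (bmF m 0) (bmF m 1) ps) ∨
  (∃ qs : List ℕ, ∃ a b : ℕ, qs.length = m - 2 ∧
    g = nfWord (bmF m 0) (bmF m 1) (qs ++ [2 * a, b]))

theorem isNormalForm_bmF (hm : 3 ≤ m) (q : Fin 2) : IsNormalForm m (bmF m q) := by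
  fin_cases q
  · exact Or.inl ⟨[1], by simp, by simp; omega, by simp, rfl⟩
  · exact Or.inl ⟨[0, 0], by simp, by simp; omega, by simp, rfl⟩

theorem IsNormalForm.comp_bmF_zero (hm : 3 ≤ m) {g : (ℕ → Fin m) → (ℕ → Fin m)}
    (hg : IsNormalForm m g) : IsNormalForm m (bmF m 0 ∘ g) := by
  rcases hg with ⟨_ | ⟨p, ps⟩, h1, h2, -, rfl⟩ | ⟨_ | ⟨c, qs⟩, a, b, hl, rfl⟩
  · simp at h1
  · exact Or.inl ⟨(p + 1) :: ps, by simp, by simpa using h2, by simp,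
      (nfWord_succ_cons _ _ p ps).symm⟩
  · simp at hl; omega
  · exact Or.inr ⟨(c + 1) :: qs, a, b, by simpa using hl, (nfWord_succ_cons _ _ c _).symm⟩

theorem IsNormalForm.comp_bmF_one (hm : 3 ≤ m) {g : (ℕ → Fin m) → (ℕ → Fin m)}
    (hg : IsNormalForm m g) : IsNormalForm m (bmF m 1 ∘ g) := by
  rcases hg with ⟨ps, h1, h2, -, rfl⟩ | ⟨qs, a, b, hl, rfl⟩
  · have hps : ps ≠ [] := by rintro rfl; simp at h1
    rw [← nfWord_zero_cons _ _ hps]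
    rcases Nat.lt_or_ge ps.length (m - 1) with hlt | hge
    · exact Or.inl ⟨0 :: ps, by simp, by simp; omega, by simpa using hps, rfl⟩
    obtain ⟨c, d, e, hcde⟩ := List.length_eq_three.mp
      (show ((0 :: ps).drop (m - 3)).length = 3 by simp; omega)
    set l := (0 :: ps).take (m - 3)
    have hl : l.length + 3 = m := by simp [l]; omega
    rw [← take_append_drop (m - 3) (0 :: ps), hcde,
      show l ++ [c, d, e] = l ++ [c, d] ++ [e] by simp]
    rcases Nat.even_or_odd d with hd | hd
    · obtain ⟨k, rfl⟩ := hd.two_dvd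
      exact Or.inr ⟨l ++ [c], k, e, by simp; omega, by simp⟩
    · rw [nfWord_merge_of_odd hm hl c hd (by simp)]
      refine Or.inl ⟨l ++ [c + (d + 1)] ++ [e], by simp, by simp; omega, ?_, rfl⟩
      intro h
      simpa using congrArg length h
  · rw [← nfWord_zero_cons _ _ (by simp), ← cons_append]
    obtain ⟨c, d, hcd⟩ := List.length_eq_two.mp
      (show ((0 :: qs).drop (m - 3)).length = 2 by simp; omega)
    set l := (0 :: qs).take (m - 3)
    have hl : l.length + 3 = m := by simp [l]; omega
    rw [← take_append_drop (m - 3) (0 :: qs), hcd]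
    refine Or.inr ⟨l ++ [c + (d + 1)], a, b, by simp; omega, ?_⟩
    rcases Nat.even_or_odd d with hd | hd
    · exact nfWord_merge_of_even hm hl c hd a b
    · exact nfWord_merge_of_odd hm hl c hd (by simp)

end BM

/-- Normal form for the semigroup `S_{B_m}`, `m ≥ 3`: every element of the semigroup
generated by the automatic transformations `f0, f1` of `B_m` equals, as a transformation,
a word `f0^(p₁) f1 ⋯ f0^(p_{k−1}) f1 f0^(p_k)` with `1 ≤ k ≤ m−1`, `p_i ≥ 0`, of total
length at least `1` (i.e. the exponent list is not `[0]`), or a word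
`f0^(p₁) f1 ⋯ f0^(p_{m−2}) f1 f0^(2p_{m−1}) f1 f0^(p_m)` with `p_i ≥ 0`. -/
theorem normal_form_bm (m : ℕ) (hm : 3 ≤ m) :
    ∀ w : List (Fin 2), w ≠ [] →
      (∃ ps : List ℕ, 1 ≤ ps.length ∧ ps.length ≤ m - 1 ∧ ps ≠ [0] ∧
        wordTrans (bmTr m) (bmOut m) w = nfWord (bmF m 0) (bmF m 1) ps) ∨
      (∃ qs : List ℕ, ∃ a b : ℕ, qs.length = m - 2 ∧
        wordTrans (bmTr m) (bmOut m) w =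
          nfWord (bmF m 0) (bmF m 1) (qs ++ [2 * a, b])) := by
  intro w hw
  induction w with
  | nil => exact absurd rfl hw
  | cons q w ih =>
    rcases eq_or_ne w [] with rfl | hw'
    · exact BM.isNormalForm_bmF hm q
    have hg : BM.IsNormalForm m (wordTrans (bmTr m) (bmOut m) w) := ih hw'
    fin_cases q
    · exact hg.comp_bmF_zero hm
    · exact hg.comp_bmF_one hm
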